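/- Let α, β ∈ ℝ with max(α, β) < d and α + β > d. Then there exists a constant c > 0 such that for every q ∈ ℤ^d, the sum over m ∈ ℤ^d of (1 + |q - m|^4)^(-α/4) · (1 + |m|^4)^(-β/4) is at most c · (1 + |q|^4)^((d - α - β)/4). -/

import Mathlib

open scoped BigOperators Real
open MeasureTheory Filter

noncomputable section

/-- Euclidean norm on `Fin d → ℝ`. -/
def enorm' {d : ℕ} (x : Fin d → ℝ) : ℝ := Real.sqrt (∑ i, (x i) ^ 2)

/-- Cast a lattice point to `Fin d → ℝ`. -/
def zcast {d : ℕ} (m : Fin d → ℤ) : Fin d → ℝ := fun i => (m i : ℝ)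

/-- The character `e^{2πi⟨m,x⟩}` on the torus. -/
def char' {d : ℕ} (m : Fin d → ℤ) (x : Fin d → ℝ) : ℂ :=
  Complex.exp (2 * Real.pi * Complex.I * (∑ i, (m i : ℝ) * x i))

/-- The dyadic family: index `0` is `ρ₋₁`, index `j+1` is `ρ₀(2^{-j}·)`,
so index `n` corresponds to the Littlewood–Paley block `Δ_{n-1}`. -/
def rho' {d : ℕ} (ρn ρ0 : (Fin d → ℝ) → ℝ) : ℕ → (Fin d → ℝ) → ℝ
  | 0 => ρn
  | (j+1) => fun x => ρ0 (fun i => x i / 2 ^ j)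

/-- A dyadic partition of unity `(ρ₋₁, ρ₀)` on `ℝ^d`. -/
def IsDyadicPartition {d : ℕ} (ρn ρ0 : (Fin d → ℝ) → ℝ) : Prop :=
  ContDiff ℝ (⊤ : ℕ∞) ρn ∧ ContDiff ℝ (⊤ : ℕ∞) ρ0 ∧ (∀ x, 0 ≤ ρn x) ∧ (∀ x, 0 ≤ ρ0 x) ∧
  (∀ x y, enorm' x = enorm' y → ρn x = ρn y) ∧
  (∀ x y, enorm' x = enorm' y → ρ0 x = ρ0 y) ∧
  tsupport ρn ⊆ {x | enorm' x ≤ 4 / 3} ∧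
  tsupport ρ0 ⊆ {x | 3 / 4 ≤ enorm' x ∧ enorm' x ≤ 8 / 3} ∧
  ∀ x, ρn x + ∑' j : ℕ, ρ0 (fun i => x i / 2 ^ j) = 1

/-- Littlewood–Paley block (as a function on the torus) of a tempered distribution on `𝕋^d`
given through its Fourier coefficient family `F`. -/
def block' {d : ℕ} (ρ : (Fin d → ℝ) → ℝ) (F : (Fin d → ℤ) → ℂ) (x : Fin d → ℝ) : ℂ :=
  ∑' m : Fin d → ℤ, (ρ (zcast m) : ℂ) * F m * char' m x

/-- The weight `2^{α(n-1)}` (block index `n` corresponds to `Δ_{n-1}`). -/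
def wt (α : ℝ) (n : ℕ) : ℝ := (2 : ℝ) ^ (α * ((n : ℝ) - 1))

/-- `‖F‖_{𝒞^α} ≤ M`, stated blockwise. -/
def BesovBdd {d : ℕ} (ρn ρ0 : (Fin d → ℝ) → ℝ) (α : ℝ) (F : (Fin d → ℤ) → ℂ) (M : ℝ) : Prop :=
  ∀ (n : ℕ) (x : Fin d → ℝ), wt α n * ‖block' (rho' ρn ρ0 n) F x‖ ≤ M

/-- `L^∞` norm of a Littlewood–Paley block. -/
def supBlock {d : ℕ} (ρn ρ0 : (Fin d → ℝ) → ℝ) (n : ℕ) (F : (Fin d → ℤ) → ℂ) : ℝ :=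
  ⨆ x : Fin d → ℝ, ‖block' (rho' ρn ρ0 n) F x‖

/-- The Hölder–Besov norm `‖F‖_α = sup_j 2^{jα} ‖Δ_j F‖_{L^∞}`. -/
def besovNorm {d : ℕ} (ρn ρ0 : (Fin d → ℝ) → ℝ) (α : ℝ) (F : (Fin d → ℤ) → ℂ) : ℝ :=
  ⨆ n : ℕ, wt α n * supBlock ρn ρ0 n F

/-- Membership in the (separable) Hölder–Besov space `𝒞^α`. -/
def MemHolderC {d : ℕ} (ρn ρ0 : (Fin d → ℝ) → ℝ) (α : ℝ) (F : (Fin d → ℤ) → ℂ) : Prop :=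
  (∃ M, BesovBdd ρn ρ0 α F M) ∧
  Tendsto (fun n : ℕ => wt α n * supBlock ρn ρ0 n F) atTop (nhds 0)

/-- A fundamental domain for the torus `𝕋^d`. -/
def cube (d : ℕ) : Set (Fin d → ℝ) := Set.Icc 0 1

/-- The `L^q(𝕋^d)` norm. -/
def LqNorm {d : ℕ} (q : ℝ) (g : (Fin d → ℝ) → ℂ) : ℝ :=
  (∫ x in cube d, ‖g x‖ ^ q) ^ (1 / q)

/-- The `m`-th Fourier coefficient of a function on `𝕋^d`. -/
def fcoef {d : ℕ} (f : (Fin d → ℝ) → ℂ) (m : Fin d → ℤ) : ℂ :=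
  ∫ x in cube d, f x * (starRingEnd ℂ) (char' m x)

end

namespace Stmt0Aux

variable {d : ℕ}


variable {d : ℕ}

/-- Integer sup-norm weight `1 + ‖m‖_∞`. -/
def Mw (m : Fin d → ℤ) : ℕ := 1 + Finset.univ.sup (fun i => (m i).natAbs)

lemma one_le_Mw (m : Fin d → ℤ) : 1 ≤ Mw m := Nat.le_add_right 1 _

lemma one_le_Mw_real (m : Fin d → ℤ) : (1:ℝ) ≤ (Mw m : ℝ) := by
  exact_mod_cast one_le_Mw m

lemma Mw_pos_real (m : Fin d → ℤ) : (0:ℝ) < (Mw m : ℝ) :=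
  lt_of_lt_of_le one_pos (one_le_Mw_real m)

lemma natAbs_le_Mw (m : Fin d → ℤ) (i : Fin d) : (m i).natAbs ≤ Mw m :=
  le_trans (Finset.le_sup (f := fun i => (m i).natAbs) (Finset.mem_univ i)) (Nat.le_add_left _ 1)

lemma Mw_neg (m : Fin d → ℤ) : Mw (-m) = Mw m := by
  simp [Mw]

lemma sup_add_le (a b : Fin d → ℤ) :
    Finset.univ.sup (fun i => ((a + b) i).natAbs)
      ≤ Finset.univ.sup (fun i => (a i).natAbs) + Finset.univ.sup (fun i => (b i).natAbs) := by
  apply Finset.sup_le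
  intro i _
  calc ((a + b) i).natAbs = (a i + b i).natAbs := rfl
    _ ≤ (a i).natAbs + (b i).natAbs := Int.natAbs_add_le _ _
    _ ≤ _ := add_le_add (Finset.le_sup (f := fun i => (a i).natAbs) (Finset.mem_univ i))
        (Finset.le_sup (f := fun i => (b i).natAbs) (Finset.mem_univ i))

lemma Mw_add_le (a b : Fin d → ℤ) : Mw (a + b) ≤ Mw a + Mw b := by
  have h := sup_add_le a b
  unfold Mw; omega

lemma Mw_mul_le (a b : Fin d → ℤ) : Mw (a + b) ≤ Mw a * Mw b := by
  have h := sup_add_le a b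
  unfold Mw
  nlinarith [h]

lemma Mw_sub_le (q m : Fin d → ℤ) : Mw q ≤ Mw (q - m) + Mw m := by
  have hq : q - m + m = q := sub_add_cancel q m
  calc Mw q = Mw (q - m + m) := by rw [hq]
    _ ≤ Mw (q - m) + Mw m := Mw_add_le _ _

lemma Mw_sub_mul_le (q m : Fin d → ℤ) : Mw q ≤ Mw (q - m) * Mw m := by
  have hq : q - m + m = q := sub_add_cancel q m
  calc Mw q = Mw (q - m + m) := by rw [hq]
    _ ≤ Mw (q - m) * Mw m := Mw_mul_le _ _



open Real

/-- P1: for `σ ∈ (0,1]`, `σ k^{σ-1} ≤ k^σ - (k-1)^σ` for `k ≥ 1`. -/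
lemma p1 {σ : ℝ} (hσ0 : 0 < σ) (hσ1 : σ ≤ 1) {k : ℝ} (hk : 1 ≤ k) :
    σ * k ^ (σ - 1) ≤ k ^ σ - (k - 1) ^ σ := by
  have hk0 : (0:ℝ) < k := lt_of_lt_of_le one_pos hk
  have hk1 : (0:ℝ) ≤ k - 1 := by linarith
  have amgm := Real.geom_mean_le_arith_mean2_weighted hσ0.le (by linarith : (0:ℝ) ≤ 1 - σ)
      hk1 hk0.le (by ring)
  -- (k-1)^σ * k^(1-σ) ≤ σ(k-1) + (1-σ)k = k - σ
  have h2 : (k - 1) ^ σ * k ^ (1 - σ) ≤ k - σ := by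
    calc (k - 1) ^ σ * k ^ (1 - σ) ≤ σ * (k-1) + (1-σ) * k := amgm
      _ = k - σ := by ring
  -- multiply by k^(σ-1) > 0
  have hpow : (0:ℝ) < k ^ (σ - 1) := Real.rpow_pos_of_pos hk0 _
  have h3 : (k - 1) ^ σ * (k ^ (1 - σ) * k ^ (σ - 1)) ≤ (k - σ) * k ^ (σ - 1) := by
    calc (k - 1) ^ σ * (k ^ (1 - σ) * k ^ (σ - 1))
        = ((k - 1) ^ σ * k ^ (1 - σ)) * k ^ (σ - 1) := by ring
      _ ≤ (k - σ) * k ^ (σ - 1) := by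
          apply mul_le_mul_of_nonneg_right h2 hpow.le
  have h4 : k ^ (1 - σ) * k ^ (σ - 1) = 1 := by
    rw [← Real.rpow_add hk0]; norm_num
  rw [h4, mul_one] at h3
  have h5 : (k - σ) * k ^ (σ - 1) = k ^ σ - σ * k ^ (σ - 1) := by
    have : k * k ^ (σ - 1) = k ^ σ := by
      rw [← Real.rpow_one_add' (le_of_lt hk0) (by intro h; simp at h; linarith : (1:ℝ) + (σ-1) ≠ 0)]
      ring_nf
    rw [sub_mul, this]
  rw [h5] at h3
  linarith

/-- P2: for `τ > 0`, `τ k^{-τ-1} ≤ (k-1)^{-τ} - k^{-τ}` for `k ≥ 2`. -/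
lemma p2 {τ : ℝ} (hτ : 0 < τ) {k : ℝ} (hk : 2 ≤ k) :
    τ * k ^ (-τ - 1) ≤ (k - 1) ^ (-τ) - k ^ (-τ) := by
  have hk0 : (0:ℝ) < k := by linarith
  have hk1 : (0:ℝ) < k - 1 := by linarith
  have hτ1 : (0:ℝ) < 1 + τ := by linarith
  -- weighted AM-GM: (k+τ)^{1/(1+τ)} (k-1)^{τ/(1+τ)} ≤ k
  have amgm := Real.geom_mean_le_arith_mean2_weighted
      (le_of_lt (by positivity : (0:ℝ) < 1/(1+τ))) (by positivity : (0:ℝ) ≤ τ/(1+τ))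
      (by linarith : (0:ℝ) ≤ k + τ) hk1.le (by field_simp)
  have hsum : 1/(1+τ) * (k + τ) + τ/(1+τ) * (k - 1) = k := by field_simp; ring
  rw [hsum] at amgm
  -- raise to power (1+τ)
  have h2 : ((k + τ) ^ (1/(1+τ)) * (k - 1) ^ (τ/(1+τ))) ^ (1+τ) ≤ k ^ (1+τ) :=
    Real.rpow_le_rpow (by positivity) amgm hτ1.le
  have h3 : ((k + τ) ^ (1/(1+τ)) * (k - 1) ^ (τ/(1+τ))) ^ (1+τ)
      = (k + τ) * (k - 1) ^ τ := by
    rw [Real.mul_rpow (by positivity) (by positivity),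
      ← Real.rpow_mul (by positivity : (0:ℝ) ≤ k + τ), ← Real.rpow_mul hk1.le]
    rw [one_div_mul_cancel (ne_of_gt hτ1), div_mul_cancel₀ _ (ne_of_gt hτ1), Real.rpow_one]
  rw [h3] at h2
  -- divide: (k+τ)(k-1)^τ ≤ k^{1+τ}  ⟹ (k+τ) k^{-1-τ} ≤ (k-1)^{-τ}
  have h4 : (k + τ) * k ^ (-τ - 1) ≤ (k - 1) ^ (-τ) := by
    have hA : (0:ℝ) < (k-1)^τ := Real.rpow_pos_of_pos hk1 τ
    have hB : (0:ℝ) < k^(1+τ) := Real.rpow_pos_of_pos hk0 _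
    have e1 : k ^ (-τ-1) = (k^(1+τ))⁻¹ := by
      rw [show -τ-1 = -(1+τ) by ring, Real.rpow_neg hk0.le]
    have e2 : (k - 1) ^ (-τ) = ((k-1) ^ τ)⁻¹ := Real.rpow_neg hk1.le τ
    rw [e1, e2, ← div_eq_mul_inv, inv_eq_one_div, div_le_div_iff₀ hB hA]
    nlinarith [h2]
  have h5 : (k + τ) * k ^ (-τ - 1) = k ^ (-τ) + τ * k ^ (-τ - 1) := by
    have : k * k ^ (-τ - 1) = k ^ (-τ) := by
      rw [← Real.rpow_one_add' (le_of_lt hk0) (by intro h; linarith : (1:ℝ) + (-τ-1) ≠ 0)]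
      ring_nf
    calc (k + τ) * k ^ (-τ - 1) = k * k ^ (-τ - 1) + τ * k ^ (-τ - 1) := by ring
      _ = k ^ (-τ) + τ * k ^ (-τ - 1) := by rw [this]
  linarith [h4, h5.symm.le.trans h4]



open Real Finset

lemma telescope (g : ℕ → ℝ) (K : ℕ) :
    ∑ k ∈ Finset.Icc 1 K, (g k - g (k-1)) = g K - g 0 := by
  induction K with
  | zero => simp
  | succ n ih =>
      rw [Finset.sum_Icc_succ_top (by omega : 1 ≤ n + 1), ih]
      simp

/-- S1: `∑_{k=1}^K k^e ≤ (1 + 1/(e+1)) K^{e+1}` for `e > -1`, `K ≥ 1`. -/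
lemma s1 {e : ℝ} (he : -1 < e) {K : ℕ} (hK : 1 ≤ K) :
    ∑ k ∈ Finset.Icc 1 K, (k:ℝ) ^ e ≤ (1 + 1/(e+1)) * (K:ℝ) ^ (e+1) := by
  have hK1 : (1:ℝ) ≤ (K:ℝ) := by exact_mod_cast hK
  have hKpos : (0:ℝ) < K := by linarith
  have he1 : (0:ℝ) < e + 1 := by linarith
  have hRpos : (0:ℝ) < (K:ℝ) ^ (e+1) := Real.rpow_pos_of_pos hKpos _
  rcases le_or_gt 0 e with he0 | he0
  · have hsum : ∑ k ∈ Finset.Icc 1 K, (k:ℝ) ^ e ≤ ∑ _k ∈ Finset.Icc 1 K, (K:ℝ) ^ e := by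
      apply Finset.sum_le_sum
      intro k hk
      have hk' : (k:ℝ) ≤ (K:ℝ) := by exact_mod_cast (Finset.mem_Icc.mp hk).2
      exact Real.rpow_le_rpow (by positivity) hk' he0
    rw [Finset.sum_const, Nat.card_Icc, nsmul_eq_mul] at hsum
    have hcard : ((K + 1 - 1 : ℕ) : ℝ) = (K:ℝ) := by push_cast [Nat.add_sub_cancel]; ring
    rw [hcard] at hsum
    calc ∑ k ∈ Finset.Icc 1 K, (k:ℝ) ^ e ≤ (K:ℝ) * (K:ℝ) ^ e := hsum
      _ = (K:ℝ) ^ (e+1) := by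
          rw [← Real.rpow_one_add' hKpos.le (by linarith), add_comm]
      _ ≤ (1 + 1/(e+1)) * (K:ℝ) ^ (e+1) := by
          nlinarith [le_of_lt (one_div_pos.mpr he1)]
  · set σ := e + 1 with hσdef
    have hσ0 : 0 < σ := he1
    have hσ1 : σ ≤ 1 := by rw [hσdef]; linarith
    set g : ℕ → ℝ := fun n => (n:ℝ) ^ σ with hg
    have key : ∀ k ∈ Finset.Icc 1 K, (k:ℝ) ^ e ≤ (1/σ) * (g k - g (k-1)) := by
      intro k hk
      have hk1n : 1 ≤ k := (Finset.mem_Icc.mp hk).1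
      have hk1 : (1:ℝ) ≤ (k:ℝ) := by exact_mod_cast hk1n
      have hp := p1 hσ0 hσ1 hk1
      have hσe : σ - 1 = e := by rw [hσdef]; ring
      rw [hσe] at hp
      have hcast : ((k - 1 : ℕ) : ℝ) = (k:ℝ) - 1 := by
        push_cast [hk1n]; ring
      have : g k - g (k-1) = (k:ℝ) ^ σ - ((k:ℝ) - 1) ^ σ := by rw [hg]; simp [hcast]
      rw [this, ← sub_nonneg]
      have expand : 1/σ * ((k:ℝ)^σ - ((k:ℝ)-1)^σ) - (k:ℝ)^e
          = (1/σ) * (((k:ℝ)^σ - ((k:ℝ)-1)^σ) - σ * (k:ℝ)^e) := by field_simp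
      rw [expand]
      have := sub_nonneg.mpr hp
      positivity
    calc ∑ k ∈ Finset.Icc 1 K, (k:ℝ) ^ e ≤ ∑ k ∈ Finset.Icc 1 K, (1/σ) * (g k - g (k-1)) :=
          Finset.sum_le_sum key
      _ = (1/σ) * (g K - g 0) := by rw [← Finset.mul_sum, telescope]
      _ ≤ (1 + 1/σ) * (K:ℝ) ^ σ := by
          have hg0 : g 0 = 0 := by simp [hg, Real.zero_rpow (ne_of_gt hσ0)]
          have hgK : g K = (K:ℝ) ^ σ := rfl
          rw [hg0, hgK, sub_zero]
          have hRp : (0:ℝ) < (K:ℝ) ^ σ := Real.rpow_pos_of_pos hKpos _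
          nlinarith

open Real Finset

lemma telescope' (g : ℕ → ℝ) (K : ℕ) : ∀ L, K ≤ L →
    ∑ k ∈ Finset.Ioc K L, (g (k-1) - g k) = g K - g L := by
  intro L
  induction L with
  | zero => intro h; simp [Nat.le_zero.mp h]
  | succ n ih =>
      intro h
      rcases Nat.lt_or_ge K (n+1) with h' | h'
      · have hKn : K ≤ n := by omega
        rw [Finset.sum_Ioc_succ_top hKn, ih hKn]
        simp
      · have : K = n + 1 := by omega
        subst this
        simp
      
/-- S2: tail estimate `∑_{k ∈ t, k ≥ K} k^e ≤ (1 + 1/(-e-1)) K^{e+1}` for `e < -1`. -/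
lemma s2 {e : ℝ} (he : e < -1) (t : Finset ℕ) {K : ℕ} (hK : 1 ≤ K)
    (ht : ∀ k ∈ t, K ≤ k) :
    ∑ k ∈ t, (k:ℝ) ^ e ≤ (1 + 1/(-e-1)) * (K:ℝ) ^ (e+1) := by
  have hK1 : (1:ℝ) ≤ (K:ℝ) := by exact_mod_cast hK
  have hKpos : (0:ℝ) < (K:ℝ) := by linarith
  set τ : ℝ := -(e+1) with hτdef
  have hτ0 : 0 < τ := by rw [hτdef]; linarith
  set L : ℕ := max K (t.sup id) with hL
  have hKL : K ≤ L := le_max_left _ _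
  have hsub : t ⊆ Finset.Icc K L := by
    intro k hk
    exact Finset.mem_Icc.mpr ⟨ht k hk, le_trans (Finset.le_sup (f := id) hk) (le_max_right _ _)⟩
  set g : ℕ → ℝ := fun n => (n:ℝ) ^ (e+1) with hg
  have step1 : ∑ k ∈ t, (k:ℝ) ^ e ≤ ∑ k ∈ Finset.Icc K L, (k:ℝ) ^ e := by
    apply Finset.sum_le_sum_of_subset_of_nonneg hsub
    intro k _ _
    positivity
  have step2 : ∑ k ∈ Finset.Icc K L, (k:ℝ) ^ e
      = (K:ℝ) ^ e + ∑ k ∈ Finset.Ioc K L, (k:ℝ) ^ e := by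
    rw [Finset.Icc_eq_cons_Ioc hKL, Finset.sum_cons]
  have step3 : ∑ k ∈ Finset.Ioc K L, (k:ℝ) ^ e
      ≤ ∑ k ∈ Finset.Ioc K L, (1/τ) * (g (k-1) - g k) := by
    apply Finset.sum_le_sum
    intro k hk
    obtain ⟨hk1, _⟩ := Finset.mem_Ioc.mp hk
    have hk2 : 2 ≤ k := by omega
    have hk2' : (2:ℝ) ≤ (k:ℝ) := by exact_mod_cast hk2
    have hp := p2 (k := (k:ℝ)) hτ0 hk2'
    have he1 : -τ - 1 = e := by rw [hτdef]; ring
    have he2 : -τ = e + 1 := by rw [hτdef]; ring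
    rw [he1, he2] at hp
    have hcast : ((k - 1 : ℕ) : ℝ) = (k:ℝ) - 1 := by
      push_cast [show 1 ≤ k by omega]; ring
    have hgg : g (k-1) - g k = ((k:ℝ) - 1) ^ (e+1) - (k:ℝ) ^ (e+1) := by
      rw [hg]; simp [hcast]
    rw [hgg, ← sub_nonneg]
    have expand : 1/τ * (((k:ℝ)-1)^(e+1) - (k:ℝ)^(e+1)) - (k:ℝ)^e
        = (1/τ) * ((((k:ℝ)-1)^(e+1) - (k:ℝ)^(e+1)) - τ * (k:ℝ)^e) := by field_simp
    rw [expand]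
    have := sub_nonneg.mpr hp
    positivity
  have step4 : ∑ k ∈ Finset.Ioc K L, (1/τ) * (g (k-1) - g k) = (1/τ) * (g K - g L) := by
    rw [← Finset.mul_sum, telescope' g K L hKL]
  have hgL : 0 ≤ g L := by rw [hg]; positivity
  have hgK : g K = (K:ℝ) ^ (e+1) := rfl
  have hKe : (K:ℝ) ^ e ≤ (K:ℝ) ^ (e+1) :=
    Real.rpow_le_rpow_of_exponent_le hK1 (by linarith)
  have hτe : 1/(-e-1) = 1/τ := by rw [hτdef]; ring_nf
  calc ∑ k ∈ t, (k:ℝ) ^ e ≤ (K:ℝ)^e + ∑ k ∈ Finset.Ioc K L, (k:ℝ) ^ e := by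
        rw [← step2]; exact step1
    _ ≤ (K:ℝ)^e + (1/τ) * (g K - g L) := by
        have := le_trans step3 step4.le
        linarith
    _ ≤ (K:ℝ)^(e+1) + (1/τ) * (K:ℝ)^(e+1) := by
        rw [hgK] at *
        have h1 : (1/τ) * ((K:ℝ)^(e+1) - g L) ≤ (1/τ) * (K:ℝ)^(e+1) := by
          apply mul_le_mul_of_nonneg_left _ (by positivity)
          linarith
        linarith
    _ = (1 + 1/(-e-1)) * (K:ℝ) ^ (e+1) := by rw [hτe]; ring

/-- Cardinality of a shell `{m ∈ s | Mw m = k}` is at most `d * 2^d * k^(d-1)`. -/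
lemma card_shell (hd : 0 < d) (k : ℕ) (hk : 1 ≤ k) (s : Finset (Fin d → ℤ)) :
    (s.filter (fun m => Mw m = k)).card ≤ d * 2^d * k^(d-1) := by
  classical
  haveI : Nonempty (Fin d) := ⟨⟨0, hd⟩⟩
  set T : Finset (Fin d → ℤ) := Finset.univ.biUnion (fun i : Fin d =>
    Fintype.piFinset (fun j => if j = i then ({(k:ℤ)-1, 1-(k:ℤ)} : Finset ℤ)
      else Finset.Icc (1-(k:ℤ)) ((k:ℤ)-1))) with hT
  have hsub : s.filter (fun m => Mw m = k) ⊆ T := by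
    intro m hm
    obtain ⟨-, hMw⟩ := Finset.mem_filter.mp hm
    have hsup : Finset.univ.sup (fun i => (m i).natAbs) = k - 1 := by
      unfold Mw at hMw; omega
    obtain ⟨i, -, hi⟩ := Finset.exists_mem_eq_sup Finset.univ Finset.univ_nonempty
      (fun i => (m i).natAbs)
    rw [hT, Finset.mem_biUnion]
    refine ⟨i, Finset.mem_univ i, ?_⟩
    rw [Fintype.mem_piFinset]
    intro j
    by_cases hji : j = i
    · subst hji
      rw [if_pos rfl]
      have habs : (m j).natAbs = k - 1 := by rw [← hi, hsup]
      have := Int.natAbs_eq (m j)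
      simp only [Finset.mem_insert, Finset.mem_singleton]
      rcases this with h | h
      · left; rw [h, habs]; omega
      · right; rw [h, habs]; omega
    · rw [if_neg hji]
      have hj : (m j).natAbs ≤ k - 1 := by
        rw [← hsup]; exact Finset.le_sup (f := fun i => (m i).natAbs) (Finset.mem_univ j)
      rw [Finset.mem_Icc]
      omega
  refine le_trans (Finset.card_le_card hsub) ?_
  refine le_trans (Finset.card_biUnion_le) ?_
  have hbound : ∀ i : Fin d,
      (Fintype.piFinset (fun j => if j = i then ({(k:ℤ)-1, 1-(k:ℤ)} : Finset ℤ)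
        else Finset.Icc (1-(k:ℤ)) ((k:ℤ)-1))).card ≤ 2^d * k^(d-1) := by
    intro i
    rw [Fintype.card_piFinset]
    have hle : ∀ j : Fin d,
        (if j = i then ({(k:ℤ)-1, 1-(k:ℤ)} : Finset ℤ)
          else Finset.Icc (1-(k:ℤ)) ((k:ℤ)-1)).card ≤ (if j = i then 2 else 2*k) := by
      intro j
      by_cases hji : j = i
      · simp only [if_pos hji]
        exact le_trans (Finset.card_insert_le _ _) (by simp)
      · simp only [if_neg hji]
        rw [Int.card_Icc]
        omega
    calc ∏ j, (if j = i then ({(k:ℤ)-1, 1-(k:ℤ)} : Finset ℤ)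
          else Finset.Icc (1-(k:ℤ)) ((k:ℤ)-1)).card
        ≤ ∏ j, (if j = i then 2 else 2*k) := Finset.prod_le_prod' (fun j _ => hle j)
      _ = 2 * (2*k)^(d-1) := by
          rw [← Finset.mul_prod_erase Finset.univ _ (Finset.mem_univ i), if_pos rfl]
          congr 1
          rw [Finset.prod_congr rfl (fun j hj => if_neg (Finset.ne_of_mem_erase hj)),
            Finset.prod_const, Finset.card_erase_of_mem (Finset.mem_univ i)]
          congr 1
          simp
      _ ≤ 2^d * k^(d-1) := by
          rw [mul_pow]
          calc 2 * (2^(d-1) * k^(d-1)) = 2^d * k^(d-1) := by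
                rw [← mul_assoc, ← pow_succ']
                congr 2
                omega
            _ ≤ 2^d * k^(d-1) := le_refl _
  calc ∑ i : Fin d, (Fintype.piFinset _).card ≤ ∑ _i : Fin d, 2^d * k^(d-1) :=
        Finset.sum_le_sum (fun i _ => hbound i)
    _ = d * 2^d * k^(d-1) := by
        rw [Finset.sum_const, Finset.card_univ, Fintype.card_fin, smul_eq_mul]; ring

/-- Reduce a lattice sum of `(Mw m)^(-b)` to a 1-d sum over the image of `Mw`. -/
lemma sum_to_shells (hd : 0 < d) (b : ℝ) (s : Finset (Fin d → ℤ)) :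
    ∑ m ∈ s, (Mw m : ℝ) ^ (-b)
      ≤ (d * 2^d : ℕ) * ∑ k ∈ s.image Mw, (k:ℝ) ^ ((d:ℝ) - 1 - b) := by
  classical
  rw [Finset.sum_comp (fun k : ℕ => (k:ℝ) ^ (-b)) Mw]
  rw [Finset.mul_sum]
  apply Finset.sum_le_sum
  intro k hk
  obtain ⟨m, hm, hMm⟩ := Finset.mem_image.mp hk
  have hk1 : 1 ≤ k := hMm ▸ one_le_Mw m
  have hk1' : (1:ℝ) ≤ (k:ℝ) := by exact_mod_cast hk1
  have hkpos : (0:ℝ) < (k:ℝ) := by linarith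
  have hcard := card_shell hd k hk1 s
  have hcast : ((s.filter (fun m => Mw m = k)).card : ℝ) ≤ (d * 2^d : ℕ) * (k:ℝ)^(d-1 : ℕ) := by
    calc ((s.filter (fun m => Mw m = k)).card : ℝ)
        ≤ ((d * 2^d * k^(d-1) : ℕ) : ℝ) := by exact_mod_cast hcard
      _ = (d * 2^d : ℕ) * (k:ℝ)^(d-1 : ℕ) := by push_cast; ring
  have hrw : (k:ℝ)^(d-1 : ℕ) * (k:ℝ)^(-b) = (k:ℝ) ^ ((d:ℝ) - 1 - b) := by
    rw [← Real.rpow_natCast (k:ℝ) (d-1), ← Real.rpow_add hkpos]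
    congr 1
    have : ((d - 1 : ℕ) : ℝ) = (d:ℝ) - 1 := by
      push_cast [hd]; ring
    rw [this]; ring
  have hnn : (0:ℝ) ≤ (k:ℝ)^(-b) := Real.rpow_nonneg hkpos.le _
  calc (s.filter (fun m => Mw m = k)).card • (k:ℝ)^(-b)
      = ((s.filter (fun m => Mw m = k)).card : ℝ) * (k:ℝ)^(-b) := nsmul_eq_mul _ _
    _ ≤ ((d * 2^d : ℕ) * (k:ℝ)^(d-1 : ℕ)) * (k:ℝ)^(-b) :=
        mul_le_mul_of_nonneg_right hcast hnn
    _ = (d * 2^d : ℕ) * ((k:ℝ)^(d-1 : ℕ) * (k:ℝ)^(-b)) := by ring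
    _ = (d * 2^d : ℕ) * (k:ℝ) ^ ((d:ℝ) - 1 - b) := by rw [hrw]

/-- E1: small-ball sum estimate. -/
lemma e1 (hd : 0 < d) {b : ℝ} (hbd : b < d) :
    ∃ C : ℝ, 0 < C ∧ ∀ (s : Finset (Fin d → ℤ)) (Q : ℝ), 1 ≤ Q →
      (∀ m ∈ s, (Mw m : ℝ) ≤ Q) →
      ∑ m ∈ s, (Mw m : ℝ) ^ (-b) ≤ C * Q ^ ((d:ℝ) - b) := by
  classical
  set e : ℝ := (d:ℝ) - 1 - b with he_def
  have he : -1 < e := by rw [he_def]; linarith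
  have he1 : 0 < e + 1 := by linarith
  have hD : (0:ℝ) < ((d * 2^d : ℕ) : ℝ) := by positivity
  refine ⟨((d * 2^d : ℕ) : ℝ) * (1 + 1/(e+1)), by positivity, ?_⟩
  intro s Q hQ hs
  set K : ℕ := ⌊Q⌋₊ with hK_def
  have hQ0 : (0:ℝ) < Q := by linarith
  have hK1 : 1 ≤ K := Nat.le_floor (by exact_mod_cast hQ)
  have himg : s.image Mw ⊆ Finset.Icc 1 K := by
    intro k hk
    obtain ⟨m, hm, hMm⟩ := Finset.mem_image.mp hk
    refine Finset.mem_Icc.mpr ⟨hMm ▸ one_le_Mw m, ?_⟩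
    apply Nat.le_floor
    rw [← hMm]
    exact hs m hm
  have h2 : ∑ k ∈ s.image Mw, (k:ℝ) ^ e ≤ ∑ k ∈ Finset.Icc 1 K, (k:ℝ) ^ e := by
    apply Finset.sum_le_sum_of_subset_of_nonneg himg
    intro k hk _
    have : 1 ≤ k := (Finset.mem_Icc.mp hk).1
    have : (0:ℝ) < (k:ℝ) := by exact_mod_cast this
    positivity
  have h3 := s1 he hK1
  have h4 : (K:ℝ) ^ (e+1) ≤ Q ^ (e+1) :=
    Real.rpow_le_rpow (by positivity) (Nat.floor_le hQ0.le) he1.le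
  have h5 : e + 1 = (d:ℝ) - b := by rw [he_def]; ring
  calc ∑ m ∈ s, (Mw m : ℝ) ^ (-b)
      ≤ ((d * 2^d : ℕ):ℝ) * ∑ k ∈ s.image Mw, (k:ℝ) ^ e := sum_to_shells hd b s
    _ ≤ ((d * 2^d : ℕ):ℝ) * ((1 + 1/(e+1)) * Q ^ (e+1)) := by
        apply mul_le_mul_of_nonneg_left _ hD.le
        refine le_trans h2 (le_trans h3 ?_)
        apply mul_le_mul_of_nonneg_left h4
        positivity
    _ = (((d * 2^d : ℕ):ℝ) * (1 + 1/(e+1))) * Q ^ ((d:ℝ) - b) := by rw [h5]; ring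

/-- E2: tail sum estimate. -/
lemma e2 (hd : 0 < d) {b : ℝ} (hbd : (d:ℝ) < b) :
    ∃ C : ℝ, 0 < C ∧ ∀ (s : Finset (Fin d → ℤ)) (Q : ℝ), 1 ≤ Q →
      (∀ m ∈ s, Q ≤ (Mw m : ℝ)) →
      ∑ m ∈ s, (Mw m : ℝ) ^ (-b) ≤ C * Q ^ ((d:ℝ) - b) := by
  classical
  set e : ℝ := (d:ℝ) - 1 - b with he_def
  have he : e < -1 := by rw [he_def]; linarith
  have hτ : 0 < -e - 1 := by linarith
  have hD : (0:ℝ) < ((d * 2^d : ℕ) : ℝ) := by positivity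
  refine ⟨((d * 2^d : ℕ) : ℝ) * (1 + 1/(-e-1)), by positivity, ?_⟩
  intro s Q hQ hs
  set K : ℕ := ⌈Q⌉₊ with hK_def
  have hQ0 : (0:ℝ) < Q := by linarith
  have hK1 : 1 ≤ K := by
    rw [hK_def]
    exact Nat.one_le_ceil_iff.mpr hQ0
  have himg : ∀ k ∈ s.image Mw, K ≤ k := by
    intro k hk
    obtain ⟨m, hm, hMm⟩ := Finset.mem_image.mp hk
    rw [hK_def]
    apply Nat.ceil_le.mpr
    rw [← hMm]
    exact hs m hm
  have h3 := s2 he (s.image Mw) hK1 himg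
  have h4 : (K:ℝ) ^ (e+1) ≤ Q ^ (e+1) :=
    Real.rpow_le_rpow_of_nonpos hQ0 (Nat.le_ceil Q) (by linarith)
  have h5 : e + 1 = (d:ℝ) - b := by rw [he_def]; ring
  calc ∑ m ∈ s, (Mw m : ℝ) ^ (-b)
      ≤ ((d * 2^d : ℕ):ℝ) * ∑ k ∈ s.image Mw, (k:ℝ) ^ e := sum_to_shells hd b s
    _ ≤ ((d * 2^d : ℕ):ℝ) * ((1 + 1/(-e-1)) * Q ^ (e+1)) := by
        apply mul_le_mul_of_nonneg_left _ hD.le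
        refine le_trans h3 ?_
        apply mul_le_mul_of_nonneg_left h4
        positivity
    _ = (((d * 2^d : ℕ):ℝ) * (1 + 1/(-e-1))) * Q ^ ((d:ℝ) - b) := by rw [h5]; ring

/-- Core: discrete convolution estimate for the sup-norm weights. -/
lemma core (hd : 0 < d) {α β : ℝ} (hα0 : 0 < α) (hβ0 : 0 < β)
    (hα : α < d) (hβ : β < d) (hαβ : (d:ℝ) < α + β) :
    ∃ C : ℝ, 0 < C ∧ ∀ (q : Fin d → ℤ) (s : Finset (Fin d → ℤ)),
      ∑ m ∈ s, (Mw (q - m) : ℝ) ^ (-α) * (Mw m : ℝ) ^ (-β)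
        ≤ C * (Mw q : ℝ) ^ ((d:ℝ) - α - β) := by
  classical
  obtain ⟨C₁, hC₁, hE1⟩ := e1 hd hβ
  obtain ⟨C₂, hC₂, hE2⟩ := e1 hd hα
  obtain ⟨C₃, hC₃, hE3⟩ := e2 hd hαβ
  set ν : ℝ := (d:ℝ) - α - β with hν
  have hν0 : ν < 0 := by rw [hν]; linarith
  refine ⟨(2:ℝ)^α * C₁ + (2:ℝ)^β * C₂ + 2 * ((2:ℝ)^(-ν) * C₃), by positivity, ?_⟩
  intro q s
  set Q : ℝ := (Mw q : ℝ) with hQdef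
  have hQ1 : (1:ℝ) ≤ Q := one_le_Mw_real q
  have hQ0 : (0:ℝ) < Q := by linarith
  have hQν : (0:ℝ) < Q ^ ν := Real.rpow_pos_of_pos hQ0 _
  set f : (Fin d → ℤ) → ℝ := fun m => (Mw (q - m) : ℝ) ^ (-α) * (Mw m : ℝ) ^ (-β) with hf
  have hf0 : ∀ m, 0 ≤ f m := fun m => by
    rw [hf]; positivity
  set p₁ : (Fin d → ℤ) → Prop := fun m => 2 * (Mw m : ℕ) ≤ Mw q with hp₁
  set p₂ : (Fin d → ℤ) → Prop := fun m => 2 * (Mw (q - m) : ℕ) ≤ Mw q with hp₂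
  set s₁ := s.filter p₁ with hs₁
  set t := s.filter (fun m => ¬ p₁ m) with ht
  set s₂ := t.filter p₂ with hs₂
  set s₃ := t.filter (fun m => ¬ p₂ m) with hs₃
  have hsplit : ∑ m ∈ s, f m = ∑ m ∈ s₁, f m + (∑ m ∈ s₂, f m + ∑ m ∈ s₃, f m) := by
    rw [hs₂, hs₃, Finset.sum_filter_add_sum_filter_not, hs₁, ht,
      Finset.sum_filter_add_sum_filter_not]
  -- region 1
  have hb1 : ∑ m ∈ s₁, f m ≤ (2:ℝ)^α * C₁ * Q ^ ν := by
    have hterm : ∀ m ∈ s₁, f m ≤ (Q/2)^(-α) * (Mw m : ℝ)^(-β) := by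
      intro m hm
      have hpm : 2 * (Mw m : ℕ) ≤ Mw q := (Finset.mem_filter.mp hm).2
      have h1 : (Mw m : ℝ) ≤ Q / 2 := by
        rw [hQdef]; rw [le_div_iff₀ (by norm_num)]
        exact_mod_cast by linarith [hpm]
      have h2 : Q / 2 ≤ (Mw (q - m) : ℝ) := by
        have := Mw_sub_le q m
        have hcast : Q ≤ (Mw (q-m) : ℝ) + (Mw m : ℝ) := by
          rw [hQdef]; exact_mod_cast this
        linarith
      have h3 : (Mw (q - m) : ℝ)^(-α) ≤ (Q/2)^(-α) :=
        Real.rpow_le_rpow_of_nonpos (by linarith) h2 (by linarith)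
      exact mul_le_mul_of_nonneg_right h3 (Real.rpow_nonneg (Mw_pos_real m).le _)
    have hsum : ∑ m ∈ s₁, f m ≤ (Q/2)^(-α) * ∑ m ∈ s₁, (Mw m : ℝ)^(-β) := by
      rw [Finset.mul_sum]
      exact Finset.sum_le_sum hterm
    have happ : ∑ m ∈ s₁, (Mw m : ℝ)^(-β) ≤ C₁ * Q ^ ((d:ℝ) - β) := by
      apply hE1 s₁ Q hQ1
      intro m hm
      have hpm : 2 * (Mw m : ℕ) ≤ Mw q := (Finset.mem_filter.mp hm).2
      have : (2:ℝ) * (Mw m : ℝ) ≤ Q := by rw [hQdef]; exact_mod_cast hpm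
      linarith [Mw_pos_real m]
    have hQhalf : (Q/2)^(-α) = (2:ℝ)^α * Q^(-α) := by
      rw [Real.div_rpow hQ0.le (by norm_num : (0:ℝ) ≤ 2), Real.rpow_neg (by norm_num : (0:ℝ) ≤ 2)]
      field_simp
    have hQQ : Q^(-α) * Q^((d:ℝ)-β) = Q^ν := by
      rw [← Real.rpow_add hQ0, hν]; ring_nf
    calc ∑ m ∈ s₁, f m ≤ (Q/2)^(-α) * (C₁ * Q ^ ((d:ℝ) - β)) := by
          refine le_trans hsum ?_
          exact mul_le_mul_of_nonneg_left happ (Real.rpow_nonneg (by linarith) _)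
      _ = (2:ℝ)^α * C₁ * (Q^(-α) * Q^((d:ℝ)-β)) := by rw [hQhalf]; ring
      _ = (2:ℝ)^α * C₁ * Q ^ ν := by rw [hQQ]
  -- region 2
  have hb2 : ∑ m ∈ s₂, f m ≤ (2:ℝ)^β * C₂ * Q ^ ν := by
    have hterm : ∀ m ∈ s₂, f m ≤ (Q/2)^(-β) * (Mw (q - m) : ℝ)^(-α) := by
      intro m hm
      have hpm : 2 * (Mw (q - m) : ℕ) ≤ Mw q := (Finset.mem_filter.mp hm).2
      have h1 : (Mw (q - m) : ℝ) ≤ Q / 2 := by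
        rw [hQdef]; rw [le_div_iff₀ (by norm_num)]
        exact_mod_cast by linarith [hpm]
      have h2 : Q / 2 ≤ (Mw m : ℝ) := by
        have := Mw_sub_le q m
        have hcast : Q ≤ (Mw (q-m) : ℝ) + (Mw m : ℝ) := by
          rw [hQdef]; exact_mod_cast this
        linarith
      have h3 : (Mw m : ℝ)^(-β) ≤ (Q/2)^(-β) :=
        Real.rpow_le_rpow_of_nonpos (by linarith) h2 (by linarith)
      rw [hf]
      calc (Mw (q - m) : ℝ) ^ (-α) * (Mw m : ℝ) ^ (-β)
          ≤ (Mw (q - m) : ℝ) ^ (-α) * (Q/2)^(-β) :=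
            mul_le_mul_of_nonneg_left h3 (Real.rpow_nonneg (Mw_pos_real _).le _)
        _ = (Q/2)^(-β) * (Mw (q - m) : ℝ)^(-α) := by ring
    have hsum : ∑ m ∈ s₂, f m ≤ (Q/2)^(-β) * ∑ m ∈ s₂, (Mw (q - m) : ℝ)^(-α) := by
      rw [Finset.mul_sum]
      exact Finset.sum_le_sum hterm
    have hinj : ∀ x ∈ s₂, ∀ y ∈ s₂, q - x = q - y → x = y := by
      intro x _ y _ h
      exact sub_right_injective h
    have himage : ∑ m' ∈ s₂.image (fun m => q - m), (Mw m' : ℝ)^(-α)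
        = ∑ m ∈ s₂, (Mw (q - m) : ℝ)^(-α) :=
      by exact Finset.sum_image hinj
    have happ : ∑ m' ∈ s₂.image (fun m => q - m), (Mw m' : ℝ)^(-α) ≤ C₂ * Q ^ ((d:ℝ) - α) := by
      apply hE2 _ Q hQ1
      intro m' hm'
      obtain ⟨m, hm, rfl⟩ := Finset.mem_image.mp hm'
      have hpm : 2 * (Mw (q - m) : ℕ) ≤ Mw q := (Finset.mem_filter.mp hm).2
      have : (2:ℝ) * (Mw (q - m) : ℝ) ≤ Q := by rw [hQdef]; exact_mod_cast hpm
      linarith [Mw_pos_real (q - m)]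
    have hQhalf : (Q/2)^(-β) = (2:ℝ)^β * Q^(-β) := by
      rw [Real.div_rpow hQ0.le (by norm_num : (0:ℝ) ≤ 2), Real.rpow_neg (by norm_num : (0:ℝ) ≤ 2)]
      field_simp
    have hQQ : Q^(-β) * Q^((d:ℝ)-α) = Q^ν := by
      rw [← Real.rpow_add hQ0, hν]; ring_nf
    calc ∑ m ∈ s₂, f m ≤ (Q/2)^(-β) * (C₂ * Q ^ ((d:ℝ) - α)) := by
          rw [← himage] at hsum
          refine le_trans hsum ?_
          exact mul_le_mul_of_nonneg_left happ (Real.rpow_nonneg (by linarith) _)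
      _ = (2:ℝ)^β * C₂ * (Q^(-β) * Q^((d:ℝ)-α)) := by rw [hQhalf]; ring
      _ = (2:ℝ)^β * C₂ * Q ^ ν := by rw [hQQ]
  -- region 3
  have hb3 : ∑ m ∈ s₃, f m ≤ 2 * ((2:ℝ)^(-ν) * C₃) * Q ^ ν := by
    set Q' : ℝ := max 1 (Q/2) with hQ'
    have hQ'1 : (1:ℝ) ≤ Q' := le_max_left _ _
    have hQ'0 : (0:ℝ) < Q' := by linarith
    have hQ'ge : Q / 2 ≤ Q' := le_max_right _ _
    have hlow : ∀ m ∈ s₃, Q' ≤ (Mw m : ℝ) ∧ Q' ≤ (Mw (q - m) : ℝ) := by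
      intro m hm
      obtain ⟨hmt, hnp₂⟩ := Finset.mem_filter.mp hm
      obtain ⟨-, hnp₁⟩ := Finset.mem_filter.mp hmt
      have h1 : Mw q < 2 * Mw m := by omega
      have h2 : Mw q < 2 * Mw (q - m) := by omega
      constructor
      · apply max_le (one_le_Mw_real m)
        have : Q < 2 * (Mw m : ℝ) := by rw [hQdef]; exact_mod_cast h1
        linarith
      · apply max_le (one_le_Mw_real (q - m))
        have : Q < 2 * (Mw (q - m) : ℝ) := by rw [hQdef]; exact_mod_cast h2
        linarith
    have hterm : ∀ m ∈ s₃, f m ≤ (Mw (q-m) : ℝ)^(-(α+β)) + (Mw m : ℝ)^(-(α+β)) := by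
      intro m _
      have hA := Mw_pos_real (q - m)
      have hB := Mw_pos_real m
      rcases le_total ((Mw (q-m) : ℝ)) ((Mw m : ℝ)) with hle | hle
      · have h3 : (Mw m : ℝ)^(-β) ≤ (Mw (q-m) : ℝ)^(-β) :=
          Real.rpow_le_rpow_of_nonpos hA hle (by linarith)
        have : f m ≤ (Mw (q-m) : ℝ)^(-(α+β)) := by
          rw [hf]
          calc (Mw (q - m) : ℝ) ^ (-α) * (Mw m : ℝ) ^ (-β)
              ≤ (Mw (q - m) : ℝ) ^ (-α) * (Mw (q-m) : ℝ) ^ (-β) :=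
                mul_le_mul_of_nonneg_left h3 (Real.rpow_nonneg hA.le _)
            _ = (Mw (q-m) : ℝ)^(-(α+β)) := by
                rw [← Real.rpow_add hA]; ring_nf
        refine le_trans this ?_
        have : (0:ℝ) ≤ (Mw m : ℝ)^(-(α+β)) := Real.rpow_nonneg hB.le _
        linarith
      · have h3 : (Mw (q-m) : ℝ)^(-α) ≤ (Mw m : ℝ)^(-α) :=
          Real.rpow_le_rpow_of_nonpos hB hle (by linarith)
        have : f m ≤ (Mw m : ℝ)^(-(α+β)) := by
          rw [hf]
          calc (Mw (q - m) : ℝ) ^ (-α) * (Mw m : ℝ) ^ (-β)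
              ≤ (Mw m : ℝ) ^ (-α) * (Mw m : ℝ) ^ (-β) :=
                mul_le_mul_of_nonneg_right h3 (Real.rpow_nonneg hB.le _)
            _ = (Mw m : ℝ)^(-(α+β)) := by
                rw [← Real.rpow_add hB]; ring_nf
        refine le_trans this ?_
        have : (0:ℝ) ≤ (Mw (q-m) : ℝ)^(-(α+β)) := Real.rpow_nonneg hA.le _
        linarith
    have hsum : ∑ m ∈ s₃, f m
        ≤ ∑ m ∈ s₃, (Mw (q-m) : ℝ)^(-(α+β)) + ∑ m ∈ s₃, (Mw m : ℝ)^(-(α+β)) := by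
      rw [← Finset.sum_add_distrib]
      exact Finset.sum_le_sum hterm
    have happB : ∑ m ∈ s₃, (Mw m : ℝ)^(-(α+β)) ≤ C₃ * Q' ^ ((d:ℝ) - (α+β)) := by
      apply hE3 s₃ Q' hQ'1
      intro m hm
      exact (hlow m hm).1
    have hinj : ∀ x ∈ s₃, ∀ y ∈ s₃, q - x = q - y → x = y := by
      intro x _ y _ h
      exact sub_right_injective h
    have himage : ∑ m' ∈ s₃.image (fun m => q - m), (Mw m' : ℝ)^(-(α+β))
        = ∑ m ∈ s₃, (Mw (q - m) : ℝ)^(-(α+β)) :=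
      by exact Finset.sum_image hinj
    have happA : ∑ m' ∈ s₃.image (fun m => q - m), (Mw m' : ℝ)^(-(α+β))
        ≤ C₃ * Q' ^ ((d:ℝ) - (α+β)) := by
      apply hE3 _ Q' hQ'1
      intro m' hm'
      obtain ⟨m, hm, rfl⟩ := Finset.mem_image.mp hm'
      exact (hlow m hm).2
    have hQ'pow : Q' ^ ((d:ℝ) - (α+β)) ≤ (2:ℝ)^(-ν) * Q ^ ν := by
      have h1 : Q' ^ ((d:ℝ) - (α+β)) ≤ (Q/2) ^ ((d:ℝ) - (α+β)) := by
        apply Real.rpow_le_rpow_of_nonpos (by linarith) hQ'ge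
        rw [hν] at hν0; linarith
      have h2 : (Q/2) ^ ((d:ℝ) - (α+β)) = (2:ℝ)^(-ν) * Q ^ ν := by
        rw [show (d:ℝ) - (α+β) = ν by rw [hν]; ring]
        rw [Real.div_rpow hQ0.le (by norm_num : (0:ℝ) ≤ 2), Real.rpow_neg (by norm_num : (0:ℝ) ≤ 2)]
        field_simp
      linarith [h1, h2.le]
    have hC₃Q : C₃ * Q' ^ ((d:ℝ) - (α+β)) ≤ C₃ * ((2:ℝ)^(-ν) * Q ^ ν) :=
      mul_le_mul_of_nonneg_left hQ'pow hC₃.le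
    calc ∑ m ∈ s₃, f m
        ≤ ∑ m ∈ s₃, (Mw (q-m) : ℝ)^(-(α+β)) + ∑ m ∈ s₃, (Mw m : ℝ)^(-(α+β)) := hsum
      _ ≤ C₃ * Q' ^ ((d:ℝ) - (α+β)) + C₃ * Q' ^ ((d:ℝ) - (α+β)) := by
          rw [← himage]
          exact add_le_add happA happB
      _ ≤ C₃ * ((2:ℝ)^(-ν) * Q ^ ν) + C₃ * ((2:ℝ)^(-ν) * Q ^ ν) := add_le_add hC₃Q hC₃Q
      _ = 2 * ((2:ℝ)^(-ν) * C₃) * Q ^ ν := by ring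
  rw [hsplit]
  have : ((2:ℝ)^α * C₁ + (2:ℝ)^β * C₂ + 2 * ((2:ℝ)^(-ν) * C₃)) * Q ^ ν
      = (2:ℝ)^α * C₁ * Q^ν + ((2:ℝ)^β * C₂ * Q^ν + 2 * ((2:ℝ)^(-ν) * C₃) * Q^ν) := by ring
  rw [hν] at *
  linarith [hb1, hb2, hb3]

lemma enorm'_nonneg (x : Fin d → ℝ) : 0 ≤ enorm' x := Real.sqrt_nonneg _

lemma sumsq_nonneg (m : Fin d → ℤ) : (0:ℝ) ≤ ∑ i, (zcast m i) ^ 2 :=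
  Finset.sum_nonneg (fun i _ => sq_nonneg _)

lemma enorm'_sq (m : Fin d → ℤ) : (enorm' (zcast m)) ^ 2 = ∑ i, (zcast m i) ^ 2 :=
  Real.sq_sqrt (sumsq_nonneg m)

/-- `Mw m ≤ 1 + enorm'(zcast m)` when `d > 0`. -/
lemma Mw_le_one_add_enorm (hd : 0 < d) (m : Fin d → ℤ) :
    (Mw m : ℝ) ≤ 1 + enorm' (zcast m) := by
  haveI : Nonempty (Fin d) := ⟨⟨0, hd⟩⟩
  obtain ⟨i, -, hi⟩ := Finset.exists_mem_eq_sup Finset.univ Finset.univ_nonempty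
    (fun i => (m i).natAbs)
  have h1 : ((m i).natAbs : ℝ) ≤ enorm' (zcast m) := by
    rw [show enorm' (zcast m) = Real.sqrt (∑ j, (zcast m j) ^ 2) from rfl]
    rw [Real.le_sqrt (by positivity) (sumsq_nonneg m)]
    have h2 : ((m i).natAbs : ℝ) ^ 2 = (zcast m i) ^ 2 := by
      have habs : ((m i).natAbs : ℝ) = |((m i : ℤ) : ℝ)| := by
        simp [Nat.cast_natAbs]
      rw [show zcast m i = ((m i : ℤ) : ℝ) from rfl, habs]
      exact sq_abs _
    rw [h2]
    exact Finset.single_le_sum (fun j _ => sq_nonneg (zcast m j)) (Finset.mem_univ i)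
  have h3 : (Mw m : ℝ) = 1 + ((m i).natAbs : ℝ) := by
    rw [show Mw m = 1 + Finset.univ.sup (fun i => (m i).natAbs) from rfl, hi]
    push_cast; ring
  rw [h3]
  linarith

/-- `enorm'(zcast m)^2 ≤ d * (Mw m)^2`. -/
lemma enorm_sq_le (m : Fin d → ℤ) :
    (enorm' (zcast m)) ^ 2 ≤ (d:ℝ) * (Mw m : ℝ) ^ 2 := by
  rw [enorm'_sq]
  have hterm : ∀ i ∈ Finset.univ, (zcast m i) ^ 2 ≤ (Mw m : ℝ) ^ 2 := by
    intro i _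
    have h1 : |zcast m i| ≤ (Mw m : ℝ) := by
      rw [show zcast m i = ((m i : ℤ) : ℝ) from rfl]
      rw [← Int.cast_abs]
      have : |m i| ≤ (Mw m : ℤ) := by
        rw [Int.abs_eq_natAbs]
        exact_mod_cast natAbs_le_Mw m i
      exact_mod_cast this
    calc (zcast m i) ^ 2 = |zcast m i| ^ 2 := (sq_abs _).symm
      _ ≤ (Mw m : ℝ) ^ 2 := by
          apply pow_le_pow_left₀ (abs_nonneg _) h1
  calc ∑ i, (zcast m i) ^ 2 ≤ ∑ _i : Fin d, (Mw m : ℝ) ^ 2 := Finset.sum_le_sum hterm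
    _ = (d:ℝ) * (Mw m : ℝ) ^ 2 := by
        rw [Finset.sum_const, Finset.card_univ, Fintype.card_fin, nsmul_eq_mul]

/-- c1 : quartic weight dominated by `Mw` weight. -/
lemma comp1 (hd : 0 < d) {x : ℝ} (hx : 0 ≤ x) (m : Fin d → ℤ) :
    (1 + enorm' (zcast m) ^ 4) ^ (-(x/4)) ≤ (2:ℝ)^x * (Mw m : ℝ) ^ (-x) := by
  set E := enorm' (zcast m) with hE
  have hE0 : 0 ≤ E := enorm'_nonneg _
  have hB : (0:ℝ) < 1 + E ^ 4 := by positivity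
  have hM := Mw_pos_real m
  have h1 : (Mw m : ℝ) ≤ 1 + E := Mw_le_one_add_enorm hd m
  have h2 : ((Mw m : ℝ)/2) ^ 4 ≤ 1 + E ^ 4 := by
    have ha : (1 + E)^4 ≤ 8*(1 + E^4) := by
      nlinarith [sq_nonneg (E - 1), sq_nonneg (E^2 - 1), sq_nonneg E, sq_nonneg (E^2 - E), hE0]
    have hb : ((Mw m : ℝ))^4 ≤ (1 + E)^4 := by
      apply pow_le_pow_left₀ hM.le h1
    nlinarith
  have h3 : (1 + E ^ 4) ^ (-(x/4)) ≤ (((Mw m : ℝ)/2) ^ 4) ^ (-(x/4)) :=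
    Real.rpow_le_rpow_of_nonpos (by positivity) h2 (by linarith)
  have h4 : (((Mw m : ℝ)/2) ^ 4) ^ (-(x/4)) = ((Mw m : ℝ)/2) ^ (-x) := by
    rw [← Real.rpow_natCast ((Mw m : ℝ)/2) 4, ← Real.rpow_mul (by positivity)]
    congr 1
    push_cast
    ring
  have h5 : ((Mw m : ℝ)/2) ^ (-x) = (2:ℝ)^x * (Mw m : ℝ) ^ (-x) := by
    rw [Real.div_rpow hM.le (by norm_num : (0:ℝ) ≤ 2),
      Real.rpow_neg (by norm_num : (0:ℝ) ≤ 2)]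
    field_simp
  calc (1 + E ^ 4) ^ (-(x/4)) ≤ (((Mw m : ℝ)/2) ^ 4) ^ (-(x/4)) := h3
    _ = (2:ℝ)^x * (Mw m : ℝ) ^ (-x) := by rw [h4, h5]

/-- c2 : `Mw` weight dominated by quartic weight, for negative exponents. -/
lemma comp2 (hd : 0 < d) {ν : ℝ} (hν : ν < 0) (q : Fin d → ℤ) :
    (Mw q : ℝ) ^ ν ≤ (2*(d:ℝ)^2) ^ (-(ν/4)) * (1 + enorm' (zcast q) ^ 4) ^ (ν/4) := by
  set E := enorm' (zcast q) with hE
  have hE0 : 0 ≤ E := enorm'_nonneg _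
  have hM := Mw_pos_real q
  have hd1 : (1:ℝ) ≤ (d:ℝ) := by exact_mod_cast hd
  have h1 : E ^ 2 ≤ (d:ℝ) * (Mw q : ℝ) ^ 2 := enorm_sq_le q
  have h2 : (1:ℝ) + E ^ 4 ≤ 2*(d:ℝ)^2 * (Mw q : ℝ) ^ 4 := by
    have hE4 : E ^ 4 = (E^2)^2 := by ring
    have h1' : (E^2)^2 ≤ ((d:ℝ) * (Mw q : ℝ) ^ 2)^2 := by
      apply pow_le_pow_left₀ (by positivity) h1
    have hM1 : (1:ℝ) ≤ (Mw q : ℝ) := one_le_Mw_real q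
    have hd2 : (1:ℝ) ≤ (d:ℝ)^2 := by nlinarith
    have hM4 : (1:ℝ) ≤ (Mw q : ℝ)^4 := by
      calc (1:ℝ) = 1^4 := by norm_num
        _ ≤ (Mw q : ℝ)^4 := pow_le_pow_left₀ zero_le_one hM1 4
    have hone : (1:ℝ) ≤ (d:ℝ)^2 * (Mw q : ℝ)^4 := by
      calc (1:ℝ) = 1 * 1 := by ring
        _ ≤ (d:ℝ)^2 * (Mw q : ℝ)^4 := mul_le_mul hd2 hM4 zero_le_one (by positivity)
    nlinarith
  have h3 : (2*(d:ℝ)^2 * (Mw q : ℝ) ^ 4) ^ (ν/4) ≤ (1 + E ^ 4) ^ (ν/4) :=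
    Real.rpow_le_rpow_of_nonpos (by positivity) h2 (by linarith)
  have h4 : (2*(d:ℝ)^2 * (Mw q : ℝ) ^ 4) ^ (ν/4)
      = (2*(d:ℝ)^2) ^ (ν/4) * (Mw q : ℝ) ^ ν := by
    rw [Real.mul_rpow (by positivity) (by positivity)]
    congr 1
    rw [← Real.rpow_natCast ((Mw q : ℝ)) 4, ← Real.rpow_mul hM.le]
    congr 1
    push_cast
    ring
  have h5 : (0:ℝ) < (2*(d:ℝ)^2) ^ (ν/4) := Real.rpow_pos_of_pos (by positivity) _
  have h6 : (Mw q : ℝ) ^ ν = ((2*(d:ℝ)^2) ^ (ν/4))⁻¹ * ((2*(d:ℝ)^2) ^ (ν/4) * (Mw q : ℝ) ^ ν) := by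
    field_simp
  rw [h6]
  have h7 : ((2*(d:ℝ)^2) ^ (ν/4))⁻¹ = (2*(d:ℝ)^2) ^ (-(ν/4)) := by
    rw [← Real.rpow_neg (by positivity)]
  rw [h7]
  apply mul_le_mul_of_nonneg_left _ (le_of_lt (Real.rpow_pos_of_pos (by positivity) _))
  rw [← h4]
  exact h3


end Stmt0Aux

/-- discrete convolution estimate on the lattice `ℤ^d`. -/
theorem stmt0 (d : ℕ) (hd : 0 < d) (α β : ℝ) (hα : α < d) (hβ : β < d)
    (hαβ : (d : ℝ) < α + β) :
    ∃ c : ℝ, 0 < c ∧ ∀ q : Fin d → ℤ,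
      Summable (fun m : Fin d → ℤ =>
        (1 + enorm' (zcast (q - m)) ^ 4) ^ (-(α / 4)) *
          (1 + enorm' (zcast m) ^ 4) ^ (-(β / 4))) ∧
      (∑' m : Fin d → ℤ,
          (1 + enorm' (zcast (q - m)) ^ 4) ^ (-(α / 4)) *
            (1 + enorm' (zcast m) ^ 4) ^ (-(β / 4)))
        ≤ c * (1 + enorm' (zcast q) ^ 4) ^ (((d : ℝ) - α - β) / 4) := by
  
  classical
  have hα0 : 0 < α := by linarith
  have hβ0 : 0 < β := by linarith
  obtain ⟨C, hC, hcore⟩ := Stmt0Aux.core hd hα0 hβ0 hα hβ hαβ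
  set ν : ℝ := (d:ℝ) - α - β with hν
  have hν0 : ν < 0 := by rw [hν]; linarith
  set c : ℝ := (2:ℝ)^α * (2:ℝ)^β * C * (2*(d:ℝ)^2) ^ (-(ν/4)) with hc
  have hc0 : 0 < c := by
    rw [hc]
    have := Real.rpow_pos_of_pos (show (0:ℝ) < 2*(d:ℝ)^2 by positivity) (-(ν/4))
    have h2a := Real.rpow_pos_of_pos (show (0:ℝ) < 2 by norm_num) α
    have h2b := Real.rpow_pos_of_pos (show (0:ℝ) < 2 by norm_num) β
    positivity
  refine ⟨c, hc0, ?_⟩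
  intro q
  set f₀ : (Fin d → ℤ) → ℝ := fun m =>
    (1 + enorm' (zcast (q - m)) ^ 4) ^ (-(α / 4)) *
      (1 + enorm' (zcast m) ^ 4) ^ (-(β / 4)) with hf₀
  have hnn : ∀ m, 0 ≤ f₀ m := by
    intro m
    rw [hf₀]
    have h1 := Stmt0Aux.enorm'_nonneg (zcast (q - m))
    have h2 := Stmt0Aux.enorm'_nonneg (zcast m)
    positivity
  have hbound : ∀ u : Finset (Fin d → ℤ),
      ∑ m ∈ u, f₀ m ≤ c * (1 + enorm' (zcast q) ^ 4) ^ (((d:ℝ) - α - β) / 4) := by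
    intro u
    have hterm : ∀ m ∈ u, f₀ m ≤
        ((2:ℝ)^α * (2:ℝ)^β) *
          ((Stmt0Aux.Mw (q - m) : ℝ) ^ (-α) * (Stmt0Aux.Mw m : ℝ) ^ (-β)) := by
      intro m _
      have h1 := Stmt0Aux.comp1 hd hα0.le (q - m)
      have h2 := Stmt0Aux.comp1 hd hβ0.le m
      have hA0 : (0:ℝ) ≤ (1 + enorm' (zcast (q - m)) ^ 4) ^ (-(α / 4)) := by
        have := Stmt0Aux.enorm'_nonneg (zcast (q - m))
        positivity
      have hB0 : (0:ℝ) ≤ (1 + enorm' (zcast m) ^ 4) ^ (-(β / 4)) := by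
        have := Stmt0Aux.enorm'_nonneg (zcast m)
        positivity
      have hC0 : (0:ℝ) ≤ (2:ℝ)^α * (Stmt0Aux.Mw (q - m) : ℝ) ^ (-α) := by
        have := Stmt0Aux.Mw_pos_real (q - m)
        positivity
      calc f₀ m ≤ ((2:ℝ)^α * (Stmt0Aux.Mw (q - m) : ℝ) ^ (-α)) *
            ((2:ℝ)^β * (Stmt0Aux.Mw m : ℝ) ^ (-β)) := by
            rw [hf₀]
            exact mul_le_mul h1 h2 hB0 hC0
        _ = ((2:ℝ)^α * (2:ℝ)^β) *
            ((Stmt0Aux.Mw (q - m) : ℝ) ^ (-α) * (Stmt0Aux.Mw m : ℝ) ^ (-β)) := by ring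
    have h2 : ∑ m ∈ u, f₀ m ≤ ((2:ℝ)^α * (2:ℝ)^β) *
        ∑ m ∈ u, (Stmt0Aux.Mw (q - m) : ℝ) ^ (-α) * (Stmt0Aux.Mw m : ℝ) ^ (-β) := by
      rw [Finset.mul_sum]
      exact Finset.sum_le_sum hterm
    have h3 := hcore q u
    have h4 := Stmt0Aux.comp2 hd hν0 q
    have hpow2 : (0:ℝ) < (2:ℝ)^α * (2:ℝ)^β := by
      have h2a := Real.rpow_pos_of_pos (show (0:ℝ) < 2 by norm_num) α
      have h2b := Real.rpow_pos_of_pos (show (0:ℝ) < 2 by norm_num) β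
      positivity
    calc ∑ m ∈ u, f₀ m
        ≤ ((2:ℝ)^α * (2:ℝ)^β) *
          ∑ m ∈ u, (Stmt0Aux.Mw (q - m) : ℝ) ^ (-α) * (Stmt0Aux.Mw m : ℝ) ^ (-β) := h2
      _ ≤ ((2:ℝ)^α * (2:ℝ)^β) * (C * (Stmt0Aux.Mw q : ℝ) ^ ((d:ℝ) - α - β)) :=
          mul_le_mul_of_nonneg_left h3 hpow2.le
      _ = ((2:ℝ)^α * (2:ℝ)^β * C) * (Stmt0Aux.Mw q : ℝ) ^ ν := by rw [← hν]; ring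
      _ ≤ ((2:ℝ)^α * (2:ℝ)^β * C) *
          ((2*(d:ℝ)^2) ^ (-(ν/4)) * (1 + enorm' (zcast q) ^ 4) ^ (ν/4)) := by
          apply mul_le_mul_of_nonneg_left h4
          positivity
      _ = c * (1 + enorm' (zcast q) ^ 4) ^ (((d:ℝ) - α - β) / 4) := by
          rw [hc, hν]
          ring
  have hsummable : Summable f₀ :=
    summable_of_sum_le (fun m => hnn m) hbound
  exact ⟨hsummable, Summable.tsum_le_of_sum_le hsummable hbound⟩
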